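/- Let X be a finite CW complex and n ≥ 0. Then the n-skeleton Xⁿ is a neighborhood deformation retract of the (n+1)-skeleton Xⁿ⁺¹: there exists a set U with Xⁿ ⊆ U ⊆ Xⁿ⁺¹, open in the subspace topology of Xⁿ⁺¹, and a continuous map H : U × [0,1] → Xⁿ⁺¹ such that H(u, 0) = u for all u ∈ U, H(u, 1) ∈ Xⁿ for all u ∈ U, and H(s, t) = s for all s ∈ Xⁿ and t ∈ [0,1]. -/

import Mathlib

open Metric

/-- A CW-complex structure (in the classical sense) on a topological space `X`:
a family of cells given by characteristic maps from closed unit balls, each a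
homeomorphism of the open ball onto its image, such that the open cells are
pairwise disjoint and partition `X`, and the image of the boundary sphere of every
`n`-cell is contained in the union of the open cells of dimension `< n`
(the `(n-1)`-skeleton). -/
structure ClassicalCWComplex (X : Type*) [TopologicalSpace X] where
  /-- the index type of the `n`-cells -/
  cell : ℕ → Type
  /-- the characteristic map of each `n`-cell. -/
  map : (n : ℕ) → cell n → EuclideanSpace ℝ (Fin n) → X
  /-- characteristic maps are continuous on the closed unit ball -/
  continuousOn : ∀ n i, ContinuousOn (map n i) (closedBall 0 1)
  /-- each characteristic map restricts to a homeomorphism of the open unit ball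
  onto the open cell: it has a continuous partial inverse there -/
  symm : ∀ n i, ∃ g : X → EuclideanSpace ℝ (Fin n),
    ContinuousOn g (map n i '' ball 0 1) ∧
    ∀ x ∈ ball (0 : EuclideanSpace ℝ (Fin n)) 1, g (map n i x) = x
  /-- the open cells are pairwise disjoint -/
  pairwiseDisjoint' : ∀ (n : ℕ) (i : cell n) (m : ℕ) (j : cell m),
    (⟨n, i⟩ : Σ k, cell k) ≠ ⟨m, j⟩ →
      Disjoint (map n i '' ball 0 1) (map m j '' ball 0 1)
  /-- the open cells cover `X` -/
  union' : ⋃ (n : ℕ) (i : cell n), map n i '' ball 0 1 = Set.univ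
  /-- the image of the boundary sphere of an `n`-cell lies in the union of the
  open cells of dimension `< n` -/
  mapsTo' : ∀ n i, map n i '' sphere 0 1 ⊆
    ⋃ (m : ℕ) (_ : m < n) (j : cell m), map m j '' ball 0 1

namespace ClassicalCWComplex

variable {X : Type*} [TopologicalSpace X] (K : ClassicalCWComplex X)

/-- The open cell of dimension `n` and index `i`. -/
def openCell (n : ℕ) (i : K.cell n) : Set X := K.map n i '' ball 0 1

/-- The `m`-skeleton: the union of the open cells of dimension at most `m`. -/
def skeleton (m : ℕ) : Set X :=
  ⋃ (n : ℕ) (_ : n ≤ m) (i : K.cell n), K.openCell n i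

end ClassicalCWComplex

/-!
Remove the centers `map j 0` of the `(n+1)`-cells and push every other point of an open
`(n+1)`-cell radially outwards onto the image of the boundary sphere, which lies in `Xⁿ`;
points of `Xⁿ` stay put. Continuity across cells comes from finiteness: finitely many maps
from compact spaces into a Hausdorff space are jointly closed, so a function on the union of
their images is continuous as soon as its composites with these maps are.
-/

open Set

theorem continuousOn_of_comp_of_isCompact_cover {ι : Type*} [Finite ι] {α : ι → Type*}
    [∀ i, TopologicalSpace (α i)] {β γ : Type*} [TopologicalSpace β] [T2Space β]
    [TopologicalSpace γ] {f : β → γ} {g : ∀ i, α i → β} {s : ∀ i, Set (α i)} {t : Set β}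
    (hs : ∀ i, IsCompact (s i)) (hg : ∀ i, ContinuousOn (g i) (s i))
    (hfg : ∀ i, ContinuousOn (f ∘ g i) (s i ∩ g i ⁻¹' t))
    (hcover : t ⊆ ⋃ i, g i '' s i) : ContinuousOn f t := by
  rw [continuousOn_iff_isClosed]
  intro C hC
  choose D hD hDeq using fun i => continuousOn_iff_isClosed.1 (hfg i) C hC
  refine ⟨⋃ i, g i '' (D i ∩ s i),
    isClosed_iUnion_of_finite fun i =>
      (((hs i).inter_left (hD i)).image_of_continuousOn
        ((hg i).mono inter_subset_right)).isClosed, ?_⟩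
  ext b
  simp only [mem_inter_iff, mem_preimage, mem_iUnion, mem_image]
  constructor
  · rintro ⟨hbC, hbt⟩
    obtain ⟨i, a, has, rfl⟩ := mem_iUnion.1 (hcover hbt)
    have had : a ∈ (f ∘ g i) ⁻¹' C ∩ (s i ∩ g i ⁻¹' t) := ⟨hbC, has, hbt⟩
    rw [hDeq i] at had
    exact ⟨⟨i, a, ⟨had.1, has⟩, rfl⟩, hbt⟩
  · rintro ⟨⟨i, a, ⟨haD, has⟩, rfl⟩, hbt⟩
    have had : a ∈ D i ∩ (s i ∩ g i ⁻¹' t) := ⟨haD, has, hbt⟩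
    rw [← hDeq i] at had
    exact ⟨had.1, hbt⟩

theorem one_sub_add_mul_pos {t a : ℝ} (ht : t ∈ Icc (0 : ℝ) 1) (ha : 0 < a) :
    0 < 1 - t + t * a := by
  rcases ht.2.lt_or_eq with ht1 | rfl
  · nlinarith [mul_nonneg ht.1 ha.le]
  · simpa using ha

section RadialHomotopy

variable {E : Type*} [NormedAddCommGroup E] [NormedSpace ℝ E]

/-- The scaling factor interpolates linearly between `1` and `‖x‖`, so this is the identity
at `t = 0` and the radial projection `x ↦ x / ‖x‖` at `t = 1`. -/
noncomputable def radialHomotopy (t : ℝ) (x : E) : E := (1 - t + t * ‖x‖)⁻¹ • x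

@[simp]
theorem radialHomotopy_zero (x : E) : radialHomotopy 0 x = x := by
  simp [radialHomotopy]

theorem radialHomotopy_of_norm_eq_one (t : ℝ) {x : E} (hx : ‖x‖ = 1) :
    radialHomotopy t x = x := by
  simp [radialHomotopy, hx]

theorem norm_radialHomotopy {t : ℝ} (ht : t ∈ Icc (0 : ℝ) 1) {x : E} (hx : x ≠ 0) :
    ‖radialHomotopy t x‖ = ‖x‖ / (1 - t + t * ‖x‖) := by
  rw [radialHomotopy, norm_smul, Real.norm_eq_abs, abs_inv,
    abs_of_pos (one_sub_add_mul_pos ht (norm_pos_iff.2 hx)), inv_mul_eq_div]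

theorem radialHomotopy_mem_closedBall {t : ℝ} (ht : t ∈ Icc (0 : ℝ) 1) {x : E}
    (hx : x ∈ closedBall 0 1) : radialHomotopy t x ∈ closedBall 0 1 := by
  rw [mem_closedBall_zero_iff] at hx ⊢
  rcases eq_or_ne x 0 with rfl | hx0
  · simp [radialHomotopy]
  rw [norm_radialHomotopy ht hx0, div_le_one (one_sub_add_mul_pos ht (norm_pos_iff.2 hx0))]
  nlinarith [ht.1, ht.2]

theorem norm_radialHomotopy_one {x : E} (hx : x ≠ 0) : ‖radialHomotopy 1 x‖ = 1 := by
  rw [norm_radialHomotopy ⟨zero_le_one, le_rfl⟩ hx]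
  simp [norm_ne_zero_iff.2 hx]

theorem continuousOn_radialHomotopy :
    ContinuousOn (fun p : E × ℝ => radialHomotopy p.2 p.1) {p | p.1 ≠ 0 ∧ p.2 ∈ Icc 0 1} :=
  ContinuousOn.smul
    ((by fun_prop : Continuous fun p : E × ℝ => 1 - p.2 + p.2 * ‖p.1‖).continuousOn.inv₀
      fun p hp => (one_sub_add_mul_pos hp.2 (norm_pos_iff.2 hp.1)).ne')
    continuousOn_fst

end RadialHomotopy

namespace ClassicalCWComplex

variable {X : Type*} [TopologicalSpace X] (K : ClassicalCWComplex X)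

theorem skeleton_mono {k l : ℕ} (h : k ≤ l) : K.skeleton k ⊆ K.skeleton l :=
  biUnion_mono (fun _ hm => le_trans hm h) fun _ _ => subset_rfl

theorem openCell_subset_skeleton {m k : ℕ} (h : m ≤ k) (i : K.cell m) :
    K.openCell m i ⊆ K.skeleton k :=
  fun _ hx => mem_iUnion₂.2 ⟨m, h, mem_iUnion.2 ⟨i, hx⟩⟩

theorem map_mem_skeleton_of_mem_sphere {m k : ℕ} (h : m ≤ k + 1) (i : K.cell m)
    {x : EuclideanSpace ℝ (Fin m)} (hx : x ∈ sphere 0 1) : K.map m i x ∈ K.skeleton k := by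
  obtain ⟨l, hl, j, hj⟩ := by simpa only [mem_iUnion] using K.mapsTo' m i ⟨x, hx, rfl⟩
  exact K.openCell_subset_skeleton (by omega) j hj

theorem map_mem_skeleton {m k : ℕ} (h : m ≤ k) (i : K.cell m)
    {x : EuclideanSpace ℝ (Fin m)} (hx : x ∈ closedBall 0 1) : K.map m i x ∈ K.skeleton k := by
  rcases (mem_closedBall_zero_iff.1 hx).lt_or_eq with hx' | hx'
  · exact K.openCell_subset_skeleton h i ⟨x, mem_ball_zero_iff.2 hx', rfl⟩
  · exact K.map_mem_skeleton_of_mem_sphere (by omega) i (mem_sphere_zero_iff_norm.2 hx')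

theorem skeleton_succ (n : ℕ) :
    K.skeleton (n + 1) = K.skeleton n ∪ ⋃ j, K.openCell (n + 1) j := by
  simp only [skeleton, Nat.le_succ_iff, iUnion_or, iUnion_union_distrib, iUnion_iUnion_eq_left]

theorem mem_skeleton_succ {n : ℕ} {u : X} :
    u ∈ K.skeleton (n + 1) ↔ u ∈ K.skeleton n ∨ ∃ j, ∃ x ∈ ball 0 1, K.map (n + 1) j x = u := by
  simp only [skeleton_succ, mem_union, mem_iUnion, openCell, mem_image]

theorem eq_of_mem_openCell {m : ℕ} {i j : K.cell m} {u : X} (hi : u ∈ K.openCell m i)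
    (hj : u ∈ K.openCell m j) : i = j := by
  by_contra hne
  exact (K.pairwiseDisjoint' m i m j (by simpa using hne)).le_bot ⟨hi, hj⟩

theorem disjoint_openCell_skeleton {n : ℕ} (j : K.cell (n + 1)) :
    Disjoint (K.openCell (n + 1) j) (K.skeleton n) := by
  simp only [skeleton, disjoint_iUnion_right]
  exact fun m hm i => K.pairwiseDisjoint' (n + 1) j m i fun h => by
    have : n + 1 = m := congrArg Sigma.fst h
    omega

noncomputable def mapInv (n : ℕ) (i : K.cell n) : X → EuclideanSpace ℝ (Fin n) :=
  (K.symm n i).choose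

theorem mapInv_map {n : ℕ} (i : K.cell n) {x : EuclideanSpace ℝ (Fin n)} (hx : x ∈ ball 0 1) :
    K.mapInv n i (K.map n i x) = x :=
  (K.symm n i).choose_spec.2 x hx

def centers (n : ℕ) : Set X := range fun j : K.cell (n + 1) => K.map (n + 1) j 0

theorem disjoint_centers_skeleton (n : ℕ) : Disjoint (K.centers n) (K.skeleton n) := by
  rintro _ hc hs u hu
  obtain ⟨j, rfl⟩ := hc hu
  exact (K.disjoint_openCell_skeleton j).le_bot ⟨⟨0, mem_ball_self one_pos, rfl⟩, hs hu⟩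

open Classical in
noncomputable def skeletonDeformation (n : ℕ) (p : X × ℝ) : X :=
  if h : ∃ j, p.1 ∈ K.openCell (n + 1) j then
    K.map (n + 1) h.choose (radialHomotopy p.2 (K.mapInv (n + 1) h.choose p.1))
  else p.1

theorem skeletonDeformation_of_mem_skeleton {n : ℕ} {u : X} (hu : u ∈ K.skeleton n) (t : ℝ) :
    K.skeletonDeformation n (u, t) = u :=
  dif_neg fun ⟨j, hj⟩ => (K.disjoint_openCell_skeleton j).le_bot ⟨hj, hu⟩

theorem skeletonDeformation_map_of_mem_ball {n : ℕ} (j : K.cell (n + 1))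
    {x : EuclideanSpace ℝ (Fin (n + 1))} (hx : x ∈ ball 0 1) (t : ℝ) :
    K.skeletonDeformation n (K.map (n + 1) j x, t) = K.map (n + 1) j (radialHomotopy t x) := by
  have h : ∃ j', K.map (n + 1) j x ∈ K.openCell (n + 1) j' := ⟨j, x, hx, rfl⟩
  rw [skeletonDeformation, dif_pos h, K.eq_of_mem_openCell h.choose_spec ⟨x, hx, rfl⟩,
    K.mapInv_map j hx]

theorem skeletonDeformation_map {n : ℕ} (j : K.cell (n + 1))
    {x : EuclideanSpace ℝ (Fin (n + 1))} (hx : x ∈ closedBall 0 1) (t : ℝ) :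
    K.skeletonDeformation n (K.map (n + 1) j x, t) = K.map (n + 1) j (radialHomotopy t x) := by
  rcases (mem_closedBall_zero_iff.1 hx).lt_or_eq with hx' | hx'
  · exact K.skeletonDeformation_map_of_mem_ball j (mem_ball_zero_iff.2 hx') t
  · rw [radialHomotopy_of_norm_eq_one t hx', K.skeletonDeformation_of_mem_skeleton
      (K.map_mem_skeleton_of_mem_sphere le_rfl j (mem_sphere_zero_iff_norm.2 hx'))]

theorem skeletonDeformation_zero {n : ℕ} {u : X} (hu : u ∈ K.skeleton (n + 1)) :
    K.skeletonDeformation n (u, 0) = u := by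
  obtain hu | ⟨j, x, hx, rfl⟩ := K.mem_skeleton_succ.1 hu
  · exact K.skeletonDeformation_of_mem_skeleton hu 0
  · rw [K.skeletonDeformation_map_of_mem_ball j hx, radialHomotopy_zero]

theorem skeletonDeformation_mem_skeleton_succ {n : ℕ} {u : X} (hu : u ∈ K.skeleton (n + 1))
    {t : ℝ} (ht : t ∈ Icc (0 : ℝ) 1) : K.skeletonDeformation n (u, t) ∈ K.skeleton (n + 1) := by
  obtain hu | ⟨j, x, hx, rfl⟩ := K.mem_skeleton_succ.1 hu
  · rw [K.skeletonDeformation_of_mem_skeleton hu t]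
    exact K.skeleton_mono n.le_succ hu
  · rw [K.skeletonDeformation_map_of_mem_ball j hx]
    exact K.map_mem_skeleton le_rfl j (radialHomotopy_mem_closedBall ht (ball_subset_closedBall hx))

theorem skeletonDeformation_one_mem_skeleton {n : ℕ} {u : X} (hu : u ∈ K.skeleton (n + 1))
    (hc : u ∉ K.centers n) : K.skeletonDeformation n (u, 1) ∈ K.skeleton n := by
  obtain hu | ⟨j, x, hx, rfl⟩ := K.mem_skeleton_succ.1 hu
  · rwa [K.skeletonDeformation_of_mem_skeleton hu 1]
  · have hx0 : x ≠ 0 := by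
      rintro rfl
      exact hc ⟨j, rfl⟩
    rw [K.skeletonDeformation_map_of_mem_ball j hx]
    exact K.map_mem_skeleton_of_mem_sphere le_rfl j
      (mem_sphere_zero_iff_norm.2 (norm_radialHomotopy_one hx0))

theorem continuousOn_skeletonDeformation_comp_map {n m : ℕ} (hm : m ≤ n + 1) (i : K.cell m) :
    ContinuousOn (fun p : EuclideanSpace ℝ (Fin m) × ℝ =>
        K.skeletonDeformation n (K.map m i p.1, p.2))
      (closedBall 0 1 ×ˢ Icc 0 1 ∩ {p | K.map m i p.1 ∉ K.centers n}) := by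
  obtain hm | rfl := hm.lt_or_eq
  · refine ((K.continuousOn m i).comp continuousOn_fst fun p hp => hp.1.1).congr fun p hp => ?_
    exact K.skeletonDeformation_of_mem_skeleton (K.map_mem_skeleton (by omega) i hp.1.1) _
  · have hradial : ContinuousOn (fun p : EuclideanSpace ℝ (Fin (n + 1)) × ℝ =>
          radialHomotopy p.2 p.1)
        (closedBall 0 1 ×ˢ Icc 0 1 ∩ {p | K.map (n + 1) i p.1 ∉ K.centers n}) := by
      refine continuousOn_radialHomotopy.mono fun p hp => ⟨?_, hp.1.2⟩
      rintro h
      exact hp.2 ⟨i, by rw [← h]⟩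
    refine ((K.continuousOn _ i).comp hradial fun p hp => ?_).congr
      fun p hp => K.skeletonDeformation_map i hp.1.1 p.2
    exact radialHomotopy_mem_closedBall hp.1.2 hp.1.1

theorem continuousOn_skeletonDeformation [T2Space X] (hfin : Finite (Σ m, K.cell m)) (n : ℕ) :
    ContinuousOn (K.skeletonDeformation n) ((K.skeleton (n + 1) \ K.centers n) ×ˢ Icc 0 1) := by
  refine continuousOn_of_comp_of_isCompact_cover (ι := {c : Σ m, K.cell m // c.1 ≤ n + 1})
    (g := fun c => Prod.map (K.map c.1.1 c.1.2) id) (s := fun _ => closedBall 0 1 ×ˢ Icc 0 1)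
    (fun _ => (isCompact_closedBall _ _).prod isCompact_Icc)
    (fun _ => (K.continuousOn _ _).prodMap continuousOn_id)
    (fun c => (K.continuousOn_skeletonDeformation_comp_map c.2 c.1.2).mono
      fun p hp => ⟨hp.1, hp.2.1.2⟩) ?_
  rintro ⟨u, t⟩ ⟨⟨hu, -⟩, ht⟩
  simp only [skeleton, mem_iUnion] at hu
  obtain ⟨m, hm, i, x, hx, rfl⟩ := hu
  exact mem_iUnion.2 ⟨⟨⟨m, i⟩, hm⟩, (x, t), ⟨ball_subset_closedBall hx, ht⟩, rfl⟩

end ClassicalCWComplex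

/-- In a finite CW complex, the `n`-skeleton is a neighborhood
deformation retract of the `(n+1)`-skeleton: there is a set `U` with
`Xⁿ ⊆ U ⊆ Xⁿ⁺¹`, open in the subspace topology of `Xⁿ⁺¹`, and a homotopy
`H : U × [0,1] → Xⁿ⁺¹` starting at the inclusion, ending inside `Xⁿ`, and fixing
`Xⁿ` pointwise at all times. -/
theorem stmt6 {X : Type*} [TopologicalSpace X] [T2Space X]
    (K : ClassicalCWComplex X) (hfin : Finite (Σ n, K.cell n)) (n : ℕ) :
    ∃ U : Set X, K.skeleton n ⊆ U ∧ U ⊆ K.skeleton (n + 1) ∧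
      -- `U` is open in the subspace topology of the `(n+1)`-skeleton:
      (∃ V : Set X, IsOpen V ∧ U = V ∩ K.skeleton (n + 1)) ∧
      ∃ H : U × unitInterval → X, Continuous H ∧
        (∀ u : U, ∀ t : unitInterval, H (u, t) ∈ K.skeleton (n + 1)) ∧
        (∀ u : U, H (u, 0) = u) ∧
        (∀ u : U, H (u, 1) ∈ K.skeleton n) ∧
        (∀ u : U, (u : X) ∈ K.skeleton n → ∀ t : unitInterval, H (u, t) = u) := by
  have : Finite (K.cell (n + 1)) := .of_injective (Sigma.mk (n + 1)) sigma_mk_injective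
  refine ⟨K.skeleton (n + 1) \ K.centers n,
    fun u hu => ⟨K.skeleton_mono n.le_succ hu,
      (K.disjoint_centers_skeleton n).notMem_of_mem_right hu⟩,
    sdiff_subset, ⟨(K.centers n)ᶜ, (finite_range _).isClosed.isOpen_compl, sdiff_eq_compl_inter⟩,
    fun p => K.skeletonDeformation n (p.1, p.2),
    (K.continuousOn_skeletonDeformation hfin n).comp_continuous (by fun_prop)
      fun p => ⟨p.1.2, p.2.2⟩,
    fun u t => K.skeletonDeformation_mem_skeleton_succ u.2.1 t.2,
    fun u => K.skeletonDeformation_zero u.2.1,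
    fun u => K.skeletonDeformation_one_mem_skeleton u.2.1 u.2.2,
    fun u hu t => K.skeletonDeformation_of_mem_skeleton hu t⟩
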